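/- arXiv:2302.09798 — 2 statements merged into one kernel-verified Lean document; each statement's English description precedes it below -/
import Mathlib

section
/- Let n ≥ 3, t ≥ 2, and let x, y ∈ {0,1}^n satisfy |I_1(x) ∩ I_1(y)| = 1. Then |I_t(x) ∩ I_t(y)| ≤ Σ_{i=0}^{t−1} C(n+t, i) + Σ_{i=0}^{t−2} C(n+t−2, i)·(1 − (−1)^{t−1−i}), where C(·,·) denotes the binomial coefficient. -/
open List

/-- The `t`-insertion ball of a binary word `x`: all words of length `|x| + t`
containing `x` as a (not necessarily contiguous) subsequence. -/
def insBall (t : ℕ) (x : List Bool) : Set (List Bool) :=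
  {z | z.length = x.length + t ∧ x.Sublist z}

/-- Componentwise complement of a binary word. -/
def bcompl (w : List Bool) : List Bool := w.map (fun c => !c)

/-- `wpow p i` is the concatenation of `i` copies of the word `p`. -/
def wpow (p : List Bool) (i : ℕ) : List Bool := (List.replicate i p).flatten

/-- `w` is an alternating word of length at least 1:
`w = (a ā)^i` with `i ≥ 1`, or `w = (a ā)^j a` with `j ≥ 0`. -/
def IsAlt (w : List Bool) : Prop :=
  ∃ a : Bool, (∃ i, 1 ≤ i ∧ w = wpow [a, !a] i) ∨ (∃ j, w = wpow [a, !a] j ++ [a])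

/-- Type-A confusability: `x = u w v`, `y = u w̄ v` for an alternating block `w`. -/
def TypeA (x y : List Bool) : Prop :=
  ∃ u v w : List Bool, IsAlt w ∧ x = u ++ w ++ v ∧ y = u ++ bcompl w ++ v

/-- Type-B confusability: `{x, y} = {u a ā v b w, u ā v b b̄ w}`. -/
def TypeB (x y : List Bool) : Prop :=
  ∃ (u v w : List Bool) (a b : Bool),
    ({x, y} : Set (List Bool)) =
      {u ++ [a, !a] ++ v ++ [b] ++ w, u ++ [!a] ++ v ++ [b, !b] ++ w}

/-- `p` is a period of `s` : `s_i = s_{i+p}` whenever both indices are in range. -/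
def IsPeriodOf (p : ℕ) (s : List Bool) : Prop :=
  ∀ i, i + p < s.length → s.getD i false = s.getD (i + p) false

/-- The (smallest) period of `s` is at most `ℓ`. -/
def PeriodLe (s : List Bool) (ℓ : ℕ) : Prop :=
  ∃ p, 1 ≤ p ∧ p ≤ ℓ ∧ IsPeriodOf p s

/-- `R(n, ℓ, t)`: binary words of length `n` in which every contiguous subword
of period at most `ℓ` has length at most `t`. -/
def Rset (n ℓ t : ℕ) : Set (List Bool) :=
  {x | x.length = n ∧ ∀ s : List Bool, s <:+: x → PeriodLe s ℓ → s.length ≤ t}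

/-- `Inv(x)`: the number of pairs `i < j` with `x_i > x_j` (i.e. `x_i = 1`, `x_j = 0`). -/
def invNum (x : List Bool) : ℕ :=
  ((Finset.range x.length ×ˢ Finset.range x.length).filter
    (fun q => q.1 < q.2 ∧ x.getD q.1 false = true ∧ x.getD q.2 false = false)).card

/-!
A common supersequence `c :: w` of `x` and `y` is the same as a common supersequence `w` of the
words left after deleting a leading `c` from `x` and from `y`. This gives a Pascal-type recursion
for the number `N(x, y, m)` of common supersequences of length `m`, whose case `y = []` is the
ball size `ballCard |x| m = ∑_{i ≤ m - |x|} C(m, i)`. Induction on `m` then bounds `N`: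
by `2 ballCard |x| (m - 1)` for distinct words of equal length (Levenshtein); by
`ballCard (|q| + 2) m + 2 ballCard |q| (m - 2)` when `|p| = |q| + 1` and `q` is not a subsequence
of `p`; and by `ballCard (|x| + 1) m + 2 ballCard (|x| - 1) (m - 3)` when `N(x, y, |x| + 1) = 1`.
In the last case equal first letters pass the hypothesis on to the tails, while different first
letters split `N` into two terms, exactly one of which is a whole ball and the other of the
second kind. Finally `∑_{i<j} C(M + 1, i) (1 - (-1)^(j-i)) = 2 ∑_{i<j} C(M, i)`.
-/

namespace Supersequence

section StripHead

variable {α : Type*} [DecidableEq α]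

def stripHead (c : α) : List α → List α
  | [] => []
  | d :: l => if d = c then l else d :: l

@[simp] lemma stripHead_nil (c : α) : stripHead c [] = [] := rfl

@[simp] lemma stripHead_cons_self (c : α) (l : List α) : stripHead c (c :: l) = l := by
  simp [stripHead]

lemma stripHead_cons_of_ne {c d : α} (h : d ≠ c) (l : List α) :
    stripHead c (d :: l) = d :: l := by
  simp [stripHead, h]

lemma sublist_cons_iff_stripHead {c : α} {x w : List α} : x <+ c :: w ↔ stripHead c x <+ w := by
  cases x with
  | nil => simp
  | cons d l =>
    by_cases hdc : d = c
    · subst hdc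
      simp
    · rw [stripHead_cons_of_ne hdc]
      exact ⟨(·.of_cons_of_ne hdc), (·.cons c)⟩

end StripHead

def words (m : ℕ) : Finset (List Bool) := (Finset.univ : Finset (Fin m → Bool)).image List.ofFn

lemma mem_words {m : ℕ} {z : List Bool} : z ∈ words m ↔ z.length = m := by
  simp only [words, Finset.mem_image, Finset.mem_univ, true_and]
  constructor
  · rintro ⟨f, rfl⟩
    exact List.length_ofFn
  · rintro rfl
    exact ⟨_, List.ofFn_getElem⟩

def commonSupersequences (x y : List Bool) (m : ℕ) : Finset (List Bool) :=
  (words m).filter fun z => x <+ z ∧ y <+ z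

lemma mem_commonSupersequences {x y z : List Bool} {m : ℕ} :
    z ∈ commonSupersequences x y m ↔ z.length = m ∧ x <+ z ∧ y <+ z := by
  simp [commonSupersequences, mem_words]

lemma commonSupersequences_comm (x y : List Bool) (m : ℕ) :
    commonSupersequences x y m = commonSupersequences y x m := by
  ext z
  simp only [mem_commonSupersequences]
  tauto

lemma commonSupersequences_of_sublist {x y : List Bool} (h : y <+ x) (m : ℕ) :
    commonSupersequences x y m = commonSupersequences x [] m := by
  ext z
  simp only [mem_commonSupersequences, nil_sublist, and_true, and_congr_right_iff,
    and_iff_left_iff_imp]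
  exact fun _ hx => h.trans hx

lemma commonSupersequences_succ (x y : List Bool) (m : ℕ) :
    commonSupersequences x y (m + 1) =
      (commonSupersequences (stripHead false x) (stripHead false y) m).map
          ⟨cons false, cons_injective⟩ ∪
        (commonSupersequences (stripHead true x) (stripHead true y) m).map
          ⟨cons true, cons_injective⟩ := by
  ext z
  cases z with
  | nil => simp [mem_commonSupersequences]
  | cons c w =>
    cases c <;>
      simp [mem_commonSupersequences, sublist_cons_iff_stripHead]

lemma card_commonSupersequences_succ (x y : List Bool) (m : ℕ) :
    (commonSupersequences x y (m + 1)).card =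
      (commonSupersequences (stripHead false x) (stripHead false y) m).card +
        (commonSupersequences (stripHead true x) (stripHead true y) m).card := by
  rw [commonSupersequences_succ, Finset.card_union_of_disjoint, Finset.card_map,
    Finset.card_map]
  simp [Finset.disjoint_left]

lemma card_commonSupersequences_cons_cons_succ (a : Bool) (x y : List Bool) (m : ℕ) :
    (commonSupersequences (a :: x) (a :: y) (m + 1)).card =
      (commonSupersequences x y m).card + (commonSupersequences (a :: x) (a :: y) m).card := by
  cases a <;> simp [card_commonSupersequences_succ, stripHead, add_comm]

lemma card_commonSupersequences_cons_cons_succ_of_ne {a b : Bool} (hab : a ≠ b)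
    (x y : List Bool) (m : ℕ) :
    (commonSupersequences (a :: x) (b :: y) (m + 1)).card =
      (commonSupersequences x (b :: y) m).card + (commonSupersequences (a :: x) y m).card := by
  cases a <;> cases b <;> simp_all [card_commonSupersequences_succ, stripHead, add_comm]

lemma card_commonSupersequences_of_lt {x : List Bool} {m : ℕ} (h : m < x.length)
    (y : List Bool) : (commonSupersequences x y m).card = 0 := by
  simp only [Finset.card_eq_zero, Finset.eq_empty_iff_forall_notMem, mem_commonSupersequences]
  rintro z ⟨rfl, hx, -⟩
  exact absurd hx.length_le (by omega)

lemma card_commonSupersequences_length (x y : List Bool) :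
    (commonSupersequences x y y.length).card = if x <+ y then 1 else 0 := by
  have : commonSupersequences x y y.length = if x <+ y then {y} else ∅ := by
    ext z
    simp only [mem_commonSupersequences]
    split_ifs with hxy
    · simp only [Finset.mem_singleton]
      constructor
      · rintro ⟨hz, -, hyz⟩
        exact (hyz.eq_of_length hz.symm).symm
      · rintro rfl
        exact ⟨rfl, hxy, Sublist.refl _⟩
    · simp only [Finset.notMem_empty, iff_false]
      rintro ⟨hz, hxz, hyz⟩
      exact hxy (hyz.eq_of_length hz.symm ▸ hxz)
  split_ifs at this ⊢ <;> simp [this]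

lemma sum_range_succ_choose_succ (m j : ℕ) :
    ∑ i ∈ Finset.range (j + 1), (m + 1).choose i =
      ∑ i ∈ Finset.range (j + 1), m.choose i + ∑ i ∈ Finset.range j, m.choose i := by
  rw [Finset.sum_range_succ', Finset.sum_range_succ' (fun i => m.choose i)]
  simp only [Nat.choose_succ_succ', Finset.sum_add_distrib, Nat.choose_zero_right]
  ring

def ballCard (l m : ℕ) : ℕ := ∑ i ∈ Finset.range (m + 1 - l), m.choose i

lemma ballCard_self (l : ℕ) : ballCard l l = 1 := by
  simp [ballCard]

lemma ballCard_zero_left (m : ℕ) : ballCard 0 m = 2 ^ m := by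
  simp [ballCard, Nat.sum_range_choose]

lemma ballCard_succ_succ (l m : ℕ) :
    ballCard (l + 1) (m + 1) = ballCard l m + ballCard (l + 1) m := by
  unfold ballCard
  rcases Nat.lt_or_ge m l with h | h
  · simp [show m + 1 + 1 - (l + 1) = 0 by omega, show m + 1 - (l + 1) = 0 by omega,
      show m + 1 - l = 0 by omega]
  · rw [show m + 1 + 1 - (l + 1) = m - l + 1 by omega, show m + 1 - l = m - l + 1 by omega,
      show m + 1 - (l + 1) = m - l by omega, sum_range_succ_choose_succ]

lemma card_commonSupersequences_nil (x : List Bool) (m : ℕ) :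
    (commonSupersequences x [] m).card = ballCard x.length m := by
  induction m generalizing x with
  | zero =>
    cases x with
    | nil => simp [ballCard, commonSupersequences, words]
    | cons a l => simpa [ballCard] using card_commonSupersequences_length (a :: l) []
  | succ m ih =>
    rw [card_commonSupersequences_succ]
    cases x with
    | nil => simp [ih, ballCard_zero_left, pow_succ, mul_two]
    | cons a l =>
      cases a <;> simp [stripHead, ih, ballCard_succ_succ, add_comm]

lemma card_commonSupersequences_le (x y : List Bool) (m : ℕ) :
    (commonSupersequences x y m).card ≤ ballCard x.length m := by
  rw [← card_commonSupersequences_nil]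
  refine Finset.card_le_card fun z hz => ?_
  simp only [mem_commonSupersequences] at hz ⊢
  exact ⟨hz.1, hz.2.1, nil_sublist z⟩

lemma card_commonSupersequences_eq_zero_of_le {x y : List Bool} (hne : x ≠ y)
    (hlen : x.length = y.length) {m : ℕ} (hm : m ≤ x.length) :
    (commonSupersequences x y m).card = 0 := by
  rcases hm.lt_or_eq with hm | rfl
  · exact card_commonSupersequences_of_lt hm y
  · rw [hlen, card_commonSupersequences_length, if_neg fun hxy => hne (hxy.eq_of_length hlen)]

lemma length_pos_of_ne {x y : List Bool} (hne : x ≠ y) (hlen : x.length = y.length) :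
    0 < x.length := by
  refine Nat.pos_of_ne_zero fun h => hne ?_
  rw [List.length_eq_zero_iff.mp h, List.length_eq_zero_iff.mp (show y.length = 0 by omega)]

lemma exists_cons_cons_of_ne {x y : List Bool} (hne : x ≠ y) (hlen : x.length = y.length) :
    ∃ a x' b y', x = a :: x' ∧ y = b :: y' := by
  cases x with
  | nil => exact absurd (List.length_eq_zero_iff.mp hlen.symm).symm hne
  | cons a x' =>
    obtain ⟨b, y', rfl⟩ := List.exists_cons_of_length_eq_add_one hlen.symm
    exact ⟨a, x', b, y', rfl, rfl⟩

lemma card_commonSupersequences_le_two_mul {x y : List Bool} (hne : x ≠ y)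
    (hlen : x.length = y.length) (m : ℕ) :
    (commonSupersequences x y m).card ≤ 2 * ballCard x.length (m - 1) := by
  induction m generalizing x y with
  | zero => simp [card_commonSupersequences_eq_zero_of_le hne hlen (Nat.zero_le _)]
  | succ m ih =>
    rcases le_or_gt (m + 1) x.length with hm | hm
    · simp [card_commonSupersequences_eq_zero_of_le hne hlen hm]
    obtain ⟨a, x', b, y', rfl, rfl⟩ := exists_cons_cons_of_ne hne hlen
    rw [Nat.add_sub_cancel]
    by_cases hab : a = b
    · subst hab
      have hne' : x' ≠ y' := fun h => hne (h ▸ rfl)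
      obtain ⟨k, rfl⟩ : ∃ k, m = k + 1 := ⟨m - 1, by simp at hm; omega⟩
      have h₁ := ih hne' (by simpa using hlen)
      have h₂ := ih hne hlen
      simp only [length_cons, Nat.add_sub_cancel] at h₁ h₂ ⊢
      rw [card_commonSupersequences_cons_cons_succ, ballCard_succ_succ]
      omega
    · rw [card_commonSupersequences_cons_cons_succ_of_ne hab, commonSupersequences_comm x']
      have h₁ := card_commonSupersequences_le (b :: y') x' m
      have h₂ := card_commonSupersequences_le (a :: x') y' m
      rw [← hlen] at h₁
      omega

lemma card_commonSupersequences_le_of_not_sublist {p q : List Bool}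
    (hlen : p.length = q.length + 1) (hqp : ¬ q <+ p) (m : ℕ) :
    (commonSupersequences p q m).card ≤
      ballCard (q.length + 2) m + 2 * ballCard q.length (m - 2) := by
  induction m generalizing p q with
  | zero => simp [card_commonSupersequences_of_lt (show 0 < p.length by omega)]
  | succ m ih =>
    obtain hm | hm | hm : m + 1 < p.length ∨ m + 1 = p.length ∨ p.length < m + 1 := by omega
    · simp [card_commonSupersequences_of_lt hm]
    · rw [hm, commonSupersequences_comm, card_commonSupersequences_length, if_neg hqp]
      exact Nat.zero_le _
    obtain ⟨b, q', rfl⟩ : ∃ b q', q = b :: q' :=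
      List.exists_cons_of_ne_nil fun hq => hqp (hq ▸ nil_sublist p)
    obtain ⟨a, p', rfl⟩ := List.exists_cons_of_length_eq_add_one hlen
    have hp' : p'.length = q'.length + 1 := by simpa using hlen
    simp only [length_cons] at hm ⊢
    by_cases hab : a = b
    · subst hab
      obtain ⟨k, rfl⟩ : ∃ k, m = k + 2 := ⟨m - 2, by omega⟩
      have h₁ := ih hp' fun h => hqp (h.cons_cons a)
      have h₂ := ih hlen hqp
      have P₁ := ballCard_succ_succ (q'.length + 2) (k + 2)
      have P₂ := ballCard_succ_succ q'.length k
      rw [card_commonSupersequences_cons_cons_succ, show k + 2 + 1 - 2 = k + 1 by omega]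
      simp only [length_cons, add_assoc, Nat.reduceAdd, Nat.add_sub_cancel]
        at h₁ h₂ P₁ P₂ ⊢
      omega
    · rw [card_commonSupersequences_cons_cons_succ_of_ne hab]
      have hne : p' ≠ b :: q' := fun h => hqp (h ▸ sublist_cons_self a p')
      have h₁ := card_commonSupersequences_le_two_mul hne (by simpa using hp') m
      have h₂ := card_commonSupersequences_le (a :: p') q' m
      have P := ballCard_succ_succ (q'.length + 2) m
      simp only [length_cons, hp', add_assoc, Nat.reduceAdd] at h₁ h₂ P ⊢
      rw [show m + 1 - 2 = m - 1 by omega]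
      omega

lemma ne_of_card_commonSupersequences_eq_one {x y : List Bool}
    (h : (commonSupersequences x y (x.length + 1)).card = 1) : x ≠ y := by
  rintro rfl
  rw [commonSupersequences_of_sublist (Sublist.refl x), card_commonSupersequences_nil] at h
  simp [ballCard, Finset.sum_range_succ, show x.length + 1 + 1 - x.length = 2 by omega] at h

lemma card_add_card_le_of_sublist {a b : Bool} {x y : List Bool} (hlen : x.length = y.length)
    (hx : x <+ b :: y) (hy : ¬ y <+ a :: x) (m : ℕ) :
    (commonSupersequences x (b :: y) m).card + (commonSupersequences (a :: x) y m).card ≤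
      ballCard (x.length + 2) (m + 1) + 2 * ballCard x.length (m - 2) := by
  rw [commonSupersequences_comm x, commonSupersequences_of_sublist hx,
    card_commonSupersequences_nil]
  have h := card_commonSupersequences_le_of_not_sublist (by simpa using hlen) hy m
  have P := ballCard_succ_succ (x.length + 1) m
  simp only [length_cons, ← hlen, add_assoc, Nat.reduceAdd] at h P ⊢
  omega

theorem card_commonSupersequences_le_of_card_eq_one {x y : List Bool}
    (hlen : x.length = y.length) (h : (commonSupersequences x y (x.length + 1)).card = 1)
    (m : ℕ) :
    (commonSupersequences x y m).card ≤
      ballCard (x.length + 1) m + 2 * ballCard (x.length - 1) (m - 3) := by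
  have hne := ne_of_card_commonSupersequences_eq_one h
  induction m generalizing x y with
  | zero => simp [card_commonSupersequences_eq_zero_of_le hne hlen (Nat.zero_le _)]
  | succ m ih =>
    obtain hm | rfl | hm : m + 1 ≤ x.length ∨ m = x.length ∨ x.length < m := by omega
    · simp [card_commonSupersequences_eq_zero_of_le hne hlen hm]
    · rw [h, ballCard_self]
      omega
    obtain ⟨a, x', b, y', rfl, rfl⟩ := exists_cons_cons_of_ne hne hlen
    have hlen' : x'.length = y'.length := by simpa using hlen
    rw [length_cons] at h hm ⊢
    by_cases hab : a = b
    · subst hab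
      have h' : (commonSupersequences x' y' (x'.length + 1)).card = 1 := by
        rwa [card_commonSupersequences_cons_cons_succ,
          card_commonSupersequences_eq_zero_of_le hne hlen (by simp)] at h
      have hne' := ne_of_card_commonSupersequences_eq_one h'
      obtain ⟨l, hl⟩ : ∃ l, x'.length = l + 1 :=
        Nat.exists_eq_add_one.mpr (length_pos_of_ne hne' hlen')
      obtain ⟨k, rfl⟩ : ∃ k, m = k + 3 := ⟨m - 3, by omega⟩
      have h₁ := ih hlen' h' hne'
      have h₂ := ih hlen h hne
      have P₁ := ballCard_succ_succ (l + 2) (k + 3)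
      have P₂ := ballCard_succ_succ l k
      rw [card_commonSupersequences_cons_cons_succ]
      simp only [length_cons, hl, add_assoc, Nat.reduceAdd, Nat.add_sub_cancel,
        Nat.reduceSubDiff] at h₁ h₂ P₁ P₂ ⊢
      omega
    · rw [card_commonSupersequences_cons_cons_succ_of_ne hab] at h ⊢
      have e₁ := card_commonSupersequences_length x' (b :: y')
      have e₂ := card_commonSupersequences_length y' (a :: x')
      rw [commonSupersequences_comm] at e₂
      simp only [length_cons, ← hlen'] at e₁ e₂
      rw [show m + 1 - 3 = m - 2 by omega]
      simp only [Nat.add_sub_cancel, add_assoc, Nat.reduceAdd]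
      split_ifs at e₁ e₂ with h₁ h₂ h₂
      · omega
      · exact card_add_card_le_of_sublist hlen' h₁ h₂ m
      · have := card_add_card_le_of_sublist hlen'.symm h₂ h₁ m
        rw [commonSupersequences_comm y', commonSupersequences_comm (b :: y'), ← hlen'] at this
        omega
      · omega

lemma sum_choose_succ_mul_one_sub_neg_one_pow (M j : ℕ) :
    ∑ i ∈ Finset.range j, ((M + 1).choose i : ℤ) * (1 - (-1) ^ (j - i)) =
      2 * ∑ i ∈ Finset.range j, (M.choose i : ℤ) := by
  induction j with
  | zero => simp
  | succ j ih =>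
    have hsign :
        ∑ i ∈ Finset.range (j + 1), ((M + 1).choose i : ℤ) * (1 - (-1) ^ (j + 1 - i)) =
          2 * ∑ i ∈ Finset.range (j + 1), ((M + 1).choose i : ℤ) -
            ∑ i ∈ Finset.range (j + 1), ((M + 1).choose i : ℤ) * (1 - (-1) ^ (j - i)) := by
      rw [Finset.mul_sum, ← Finset.sum_sub_distrib]
      refine Finset.sum_congr rfl fun i hi => ?_
      rw [show j + 1 - i = j - i + 1 by simp at hi; omega, pow_succ]
      ring
    have hpascal : ∑ i ∈ Finset.range (j + 1), ((M + 1).choose i : ℤ) =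
        ∑ i ∈ Finset.range (j + 1), (M.choose i : ℤ) +
          ∑ i ∈ Finset.range j, (M.choose i : ℤ) := by
      exact_mod_cast sum_range_succ_choose_succ M j
    rw [hsign, Finset.sum_range_succ (fun i => ((M + 1).choose i : ℤ) * (1 - (-1) ^ (j - i))),
      ih, Nat.sub_self, hpascal, Finset.sum_range_succ (fun i => (M.choose i : ℤ)) j]
    ring

lemma insBall_inter_insBall {x y : List Bool} (hlen : x.length = y.length) (t : ℕ) :
    insBall t x ∩ insBall t y = ↑(commonSupersequences x y (x.length + t)) := by
  ext z
  simp only [insBall, Set.mem_inter_iff, Set.mem_ofPred_eq, Finset.mem_coe,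
    mem_commonSupersequences, ← hlen]
  tauto

end Supersequence

open Supersequence in
theorem stmt18_general (n t : ℕ) (hn : 3 ≤ n) (x y : List Bool)
    (hx : x.length = n) (hy : y.length = n)
    (h : (insBall 1 x ∩ insBall 1 y).ncard = 1) :
    ((insBall t x ∩ insBall t y).ncard : ℤ) ≤
      (∑ i ∈ Finset.range t, ((n + t).choose i : ℤ)) +
      (∑ i ∈ Finset.range (t - 1),
        ((n + t - 2).choose i : ℤ) * (1 - (-1 : ℤ)^(t - 1 - i))) := by
  have hlen : x.length = y.length := hx.trans hy.symm
  rw [insBall_inter_insBall hlen, Set.ncard_coe_finset] at h ⊢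
  have hbound := card_commonSupersequences_le_of_card_eq_one hlen h (x.length + t)
  rw [hx, ballCard, ballCard, show n + t + 1 - (n + 1) = t by omega,
    show n + t - 3 + 1 - (n - 1) = t - 1 by omega] at hbound
  rw [hx, show n + t - 2 = n + t - 3 + 1 by omega, sum_choose_succ_mul_one_sub_neg_one_pow]
  exact_mod_cast hbound

theorem stmt18 (n t : ℕ) (hn : 3 ≤ n) (ht : 2 ≤ t) (x y : List Bool)
    (hx : x.length = n) (hy : y.length = n)
    (h : (insBall 1 x ∩ insBall 1 y).ncard = 1) :
    ((insBall t x ∩ insBall t y).ncard : ℤ) ≤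
      (∑ i ∈ Finset.range t, ((n + t).choose i : ℤ)) +
      (∑ i ∈ Finset.range (t - 1),
        ((n + t - 2).choose i : ℤ) * (1 - (-1 : ℤ)^(t - 1 - i))) :=
  stmt18_general n t hn x y hx hy h
end

section
/- Let n ≥ 3, a, b ∈ {0,1}, v ∈ {0,1}^{n−3}, and set x = a ā v b and y = ā v b b̄ (so x, y ∈ {0,1}^n). Suppose I_1(x) ∩ I_1(y) = {z} is a singleton. Then for every t ≥ 2, |I_t(x) ∩ I_t(y)| ≤ |I_{t−1}(z)| + N⁺(n−1, t−1), where N⁺(m, s) = Σ_{i=0}^{s−1} C(m+s, i)·(1 − (−1)^{s−i}) and C(·,·) denotes the binomial coefficient. -/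
open List

/-!
Write `z = a y = x b̄`. A common supersequence of `x` and `y` either contains `z`, or it must
begin with `ā` and end with `b`, and then its interior is a common supersequence of the two words
`a ā v` and `v b b̄` of length `n - 1`. These words are distinct, for otherwise `ā x` would be a
second element of `I₁(x) ∩ I₁(y)`, so Levenshtein's bound `N⁺(n - 1, t - 1)` applies to them; it
follows by splitting supersequences by their first letter, as does the size of an insertion ball.
-/

lemma insBall_finite (t : ℕ) (x : List Bool) : (insBall t x).Finite :=
  (List.finite_length_eq Bool _).subset fun _ hw => hw.1

lemma insBall_zero (x : List Bool) : insBall 0 x = {x} := by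
  ext w
  refine ⟨fun ⟨hlen, hsub⟩ => (hsub.eq_of_length hlen.symm).symm, ?_⟩
  rintro rfl
  exact ⟨rfl, List.Sublist.refl w⟩

lemma cons_mem_insBall_cons_iff {c : Bool} {w x : List Bool} {t : ℕ} :
    c :: w ∈ insBall t (c :: x) ↔ w ∈ insBall t x := by
  simp only [insBall, Set.mem_ofPred_eq, List.length_cons, List.cons_sublist_cons]
  exact and_congr_left' (by omega)

lemma mem_insBall_of_cons_mem {c : Bool} {w x : List Bool} {t : ℕ} (hx : x.head? ≠ some c)
    (h : c :: w ∈ insBall (t + 1) x) : w ∈ insBall t x := by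
  obtain ⟨hlen, hsub⟩ := h
  refine ⟨by simp only [List.length_cons] at hlen; omega, ?_⟩
  rcases List.sublist_cons_iff.mp hsub with hsub | ⟨r, rfl, -⟩
  · exact hsub
  · simp at hx

lemma ncard_le_add_of_cons_mem {S A B : Set (List Bool)} (c : Bool) (hA : A.Finite)
    (hB : B.Finite) (hS : [] ∉ S) (hcA : ∀ w, c :: w ∈ S → w ∈ A)
    (hcB : ∀ w, (!c) :: w ∈ S → w ∈ B) : S.ncard ≤ A.ncard + B.ncard := by
  have hsub : S ⊆ (c :: ·) '' A ∪ ((!c) :: ·) '' B := by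
    rintro (_ | ⟨d, w⟩) hw
    · exact absurd hw hS
    · obtain rfl | rfl : d = c ∨ d = !c := by cases c <;> cases d <;> simp
      · exact Or.inl ⟨w, hcA w hw, rfl⟩
      · exact Or.inr ⟨w, hcB w hw, rfl⟩
  calc S.ncard ≤ ((c :: ·) '' A ∪ ((!c) :: ·) '' B).ncard :=
        Set.ncard_le_ncard hsub ((hA.image _).union (hB.image _))
    _ ≤ ((c :: ·) '' A).ncard + (((!c) :: ·) '' B).ncard := Set.ncard_union_le _ _
    _ ≤ A.ncard + B.ncard := add_le_add (Set.ncard_image_le hA) (Set.ncard_image_le hB)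

/-- By Levenshtein, `ballBound m d` is the size of the `d`-insertion ball of any word of
length `m`. -/
def ballBound (m d : ℕ) : ℕ := ∑ i ∈ Finset.range (d + 1), (m + d).choose i

lemma ballBound_zero_right (m : ℕ) : ballBound m 0 = 1 := by
  simp [ballBound]

lemma ballBound_zero_left (d : ℕ) : ballBound 0 d = 2 ^ d := by
  simp [ballBound, Nat.sum_range_choose]

lemma ballBound_succ_succ (m d : ℕ) :
    ballBound (m + 1) (d + 1) = ballBound m (d + 1) + ballBound (m + 1) d := by
  simp only [ballBound, show m + 1 + (d + 1) = (m + d + 1) + 1 by omega,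
    show m + (d + 1) = m + d + 1 by omega, show m + 1 + d = m + d + 1 by omega]
  rw [Finset.sum_range_succ' _ (d + 1), Finset.sum_range_succ' (fun i => (m + d + 1).choose i)]
  simp only [Nat.choose_succ_succ', Finset.sum_add_distrib, Nat.choose_zero_right]
  ring

theorem ncard_insBall_le (x : List Bool) (d : ℕ) :
    (insBall d x).ncard ≤ ballBound x.length d := by
  induction x generalizing d with
  | nil =>
    induction d with
    | zero => simp [insBall_zero, ballBound_zero_right]
    | succ d ih =>
      have := ncard_le_add_of_cons_mem false (insBall_finite d []) (insBall_finite d [])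
        (by simp [insBall]) (fun w => mem_insBall_of_cons_mem (by simp))
        (fun w => mem_insBall_of_cons_mem (by simp))
      simp only [List.length_nil, ballBound_zero_left] at ih ⊢
      omega
  | cons c x ihx =>
    induction d with
    | zero => simp [insBall_zero, ballBound_zero_right]
    | succ d ihd =>
      calc (insBall (d + 1) (c :: x)).ncard
          ≤ (insBall (d + 1) x).ncard + (insBall d (c :: x)).ncard :=
            ncard_le_add_of_cons_mem c (insBall_finite _ _) (insBall_finite _ _)
              (by simp [insBall]) (fun w => cons_mem_insBall_cons_iff.mp)
              (fun w => mem_insBall_of_cons_mem (by simp))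
        _ ≤ ballBound x.length (d + 1) + ballBound (x.length + 1) d := add_le_add (ihx _) ihd
        _ = ballBound (c :: x).length (d + 1) := (ballBound_succ_succ _ _).symm

theorem ncard_inter_insBall_le {x y : List Bool} (hlen : x.length = y.length) (hne : x ≠ y)
    (d : ℕ) : (insBall (d + 1) x ∩ insBall (d + 1) y).ncard ≤ 2 * ballBound x.length d := by
  induction x generalizing y d with
  | nil => exact absurd (List.eq_nil_of_length_eq_zero hlen.symm).symm hne
  | cons c x ih =>
    obtain _ | ⟨e, y⟩ := y
    · simp at hlen
    have hlen' : x.length = y.length := by simpa using hlen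
    by_cases hce : c = e
    · subst hce
      have hxy : x ≠ y := fun h => hne (h ▸ rfl)
      have hsplit : ∀ d, (insBall (d + 1) (c :: x) ∩ insBall (d + 1) (c :: y)).ncard ≤
          (insBall (d + 1) x ∩ insBall (d + 1) y).ncard +
            (insBall d (c :: x) ∩ insBall d (c :: y)).ncard := fun d =>
        ncard_le_add_of_cons_mem c ((insBall_finite _ _).inter_of_left _)
          ((insBall_finite _ _).inter_of_left _) (by simp [insBall])
          (fun w h => ⟨cons_mem_insBall_cons_iff.mp h.1, cons_mem_insBall_cons_iff.mp h.2⟩)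
          (fun w h => ⟨mem_insBall_of_cons_mem (by simp) h.1,
            mem_insBall_of_cons_mem (by simp) h.2⟩)
      induction d with
      | zero =>
        have hdisj : insBall 0 (c :: x) ∩ insBall 0 (c :: y) = ∅ := by
          simp [insBall_zero, hxy]
        calc _ ≤ _ := hsplit 0
          _ ≤ 2 * ballBound x.length 0 + 0 := by
            rw [hdisj, Set.ncard_empty]; exact add_le_add (ih hlen' hxy 0) le_rfl
          _ = 2 * ballBound (c :: x).length 0 := by simp only [ballBound_zero_right]
      | succ d ihd =>
        calc _ ≤ _ := hsplit (d + 1)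
          _ ≤ 2 * ballBound x.length (d + 1) + 2 * ballBound (x.length + 1) d :=
            add_le_add (ih hlen' hxy _) ihd
          _ = 2 * ballBound (c :: x).length (d + 1) := by
            rw [List.length_cons, ballBound_succ_succ]; ring
    · calc _ ≤ (insBall d (e :: y)).ncard + (insBall d (c :: x)).ncard :=
            ncard_le_add_of_cons_mem c (insBall_finite _ _) (insBall_finite _ _)
              (by simp [insBall])
              (fun w h => mem_insBall_of_cons_mem (by simpa [eq_comm] using hce) h.2)
              (fun w h => mem_insBall_of_cons_mem (by simp) h.1)
        _ ≤ ballBound (e :: y).length d + ballBound (c :: x).length d :=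
            add_le_add (ncard_insBall_le _ _) (ncard_insBall_le _ _)
        _ = 2 * ballBound (c :: x).length d := by rw [hlen]; ring

lemma sum_range_choose_succ_add_choose (M d : ℕ) :
    ∑ i ∈ Finset.range (d + 1), (M + 1).choose i + M.choose d =
      2 * ∑ i ∈ Finset.range (d + 1), M.choose i := by
  induction d with
  | zero => simp
  | succ d ih =>
    rw [Finset.sum_range_succ, Finset.sum_range_succ _ (d + 1), Nat.choose_succ_succ']
    linarith

lemma sum_range_neg_one_pow_sub_mul_choose (M d : ℕ) :
    ∑ i ∈ Finset.range (d + 1), (-1 : ℤ) ^ (d + 1 - i) * ((M + 1).choose i : ℤ) =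
      -(M.choose d : ℤ) := by
  have hsign : ∀ i ∈ Finset.range (d + 1),
      (-1 : ℤ) ^ (d + 1 - i) * ((M + 1).choose i : ℤ) =
        (-1) ^ (d + 1) * ((-1) ^ i * ((M + 1).choose i : ℤ)) := by
    intro i hi
    have : d + 1 + i = d + 1 - i + 2 * i := by simp at hi; omega
    rw [← mul_assoc, ← pow_add, this, pow_add, pow_mul]
    simp
  rw [Finset.sum_congr rfl hsign, ← Finset.mul_sum, Int.alternating_sum_range_choose_eq_choose,
    ← mul_assoc, ← pow_add]
  simp

/-- The left-hand side is `N⁺(m, d + 1)`. -/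
lemma sum_choose_mul_one_sub_neg_one_pow (m d : ℕ) :
    ∑ i ∈ Finset.range (d + 1), ((m + (d + 1)).choose i : ℤ) * (1 - (-1 : ℤ) ^ (d + 1 - i)) =
      2 * ballBound m d := by
  have hpascal := sum_range_choose_succ_add_choose (m + d) d
  rw [show m + (d + 1) = m + d + 1 by omega]
  simp only [mul_sub, mul_one, Finset.sum_sub_distrib, mul_comm _ ((-1 : ℤ) ^ _),
    sum_range_neg_one_pow_sub_mul_choose, ballBound]
  rw [sub_neg_eq_add]
  exact_mod_cast hpascal

lemma List.Sublist.of_append_singleton_of_ne {α : Type*} {c d : α} {l w : List α} (hne : c ≠ d)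
    (h : (l ++ [c]).Sublist (w ++ [d])) : (l ++ [c]).Sublist w := by
  rw [← List.reverse_sublist] at h ⊢
  simpa using (by simpa using h : (c :: l.reverse).Sublist (d :: w.reverse)).of_cons_of_ne hne

lemma exists_eq_of_not_sublist {a b : Bool} {v w : List Bool}
    (hx : ([a, !a] ++ v ++ [b]).Sublist w) (hy : ([!a] ++ v ++ [b, !b]).Sublist w)
    (hz : ¬ (a :: ([!a] ++ v ++ [b, !b])).Sublist w) :
    ∃ q, w = (!a) :: (q ++ [b]) ∧ ([a, !a] ++ v).Sublist q ∧ (v ++ [b, !b]).Sublist q := by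
  obtain _ | ⟨c, u⟩ := w
  · simp at hx
  obtain rfl : c = !a := by
    by_contra hc
    obtain rfl : c = a := by cases a <;> cases c <;> simp_all
    exact hz (List.cons_sublist_cons.mpr (hy.of_cons_of_ne (by simp)))
  have hxu : ([a, !a] ++ v ++ [b]).Sublist u := hx.of_cons_of_ne (by simp)
  have hyu : (v ++ [b, !b]).Sublist u := List.cons_sublist_cons.mp hy
  obtain ⟨q, e, rfl⟩ : ∃ q e, u = q ++ [e] := by
    rcases u.eq_nil_or_concat' with rfl | h
    · simp at hxu
    · exact h
  obtain rfl : b = e := by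
    by_contra he
    obtain rfl : e = !b := by cases b <;> cases e <;> simp_all
    refine hz (List.Sublist.cons _ ?_)
    simpa using
      (List.append_sublist_append_right [!b]).mpr (hxu.of_append_singleton_of_ne (by simp))
  refine ⟨q, rfl, (List.append_sublist_append_right [b]).mp hxu, ?_⟩
  have hyu' : ((v ++ [b]) ++ [!b]).Sublist (q ++ [b]) := by simpa using hyu
  simpa using hyu'.of_append_singleton_of_ne (by simp)

lemma inter_insBall_subset (a b : Bool) (v : List Bool) (t : ℕ) :
    insBall (t + 1) ([a, !a] ++ v ++ [b]) ∩ insBall (t + 1) ([!a] ++ v ++ [b, !b]) ⊆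
      insBall t (a :: ([!a] ++ v ++ [b, !b])) ∪
        (fun q => (!a) :: (q ++ [b])) ''
          (insBall t ([a, !a] ++ v) ∩ insBall t (v ++ [b, !b])) := by
  rintro w ⟨⟨hlx, hx⟩, -, hy⟩
  simp only [List.length_append, List.length_cons, List.length_nil] at hlx
  by_cases hz : (a :: ([!a] ++ v ++ [b, !b])).Sublist w
  · exact Or.inl ⟨by simp; omega, hz⟩
  obtain ⟨q, rfl, hxq, hyq⟩ := exists_eq_of_not_sublist hx hy hz
  refine Or.inr ⟨q, ⟨⟨?_, hxq⟩, ?_, hyq⟩, rfl⟩ <;> simp at hlx ⊢ <;> omega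

lemma ncard_inter_insBall_le_of_ne {a b : Bool} {v : List Bool}
    (hne : [a, !a] ++ v ≠ v ++ [b, !b]) (d : ℕ) :
    (insBall (d + 2) ([a, !a] ++ v ++ [b]) ∩ insBall (d + 2) ([!a] ++ v ++ [b, !b])).ncard ≤
      (insBall (d + 1) (a :: ([!a] ++ v ++ [b, !b]))).ncard + 2 * ballBound (v.length + 2) d := by
  set Z := insBall (d + 1) (a :: ([!a] ++ v ++ [b, !b]))
  set Q := insBall (d + 1) ([a, !a] ++ v) ∩ insBall (d + 1) (v ++ [b, !b])
  have hQ : Q.Finite := (insBall_finite _ _).inter_of_left _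
  calc _ ≤ (Z ∪ (fun q => (!a) :: (q ++ [b])) '' Q).ncard :=
        Set.ncard_le_ncard (inter_insBall_subset a b v (d + 1))
          ((insBall_finite _ _).union (hQ.image _))
    _ ≤ Z.ncard + ((fun q => (!a) :: (q ++ [b])) '' Q).ncard := Set.ncard_union_le _ _
    _ ≤ Z.ncard + Q.ncard := Nat.add_le_add_left (Set.ncard_image_le hQ) _
    _ ≤ Z.ncard + 2 * ballBound (v.length + 2) d := by
      have hlen : ([a, !a] ++ v).length = v.length + 2 := by simp
      exact Nat.add_le_add_left (hlen ▸ ncard_inter_insBall_le (by simp) hne d) _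

theorem stmt19 (n : ℕ) (hn : 3 ≤ n) (a b : Bool) (v : List Bool)
    (hv : v.length = n - 3) (x y : List Bool)
    (hx : x = [a, !a] ++ v ++ [b]) (hy : y = [!a] ++ v ++ [b, !b])
    (z : List Bool) (hz : insBall 1 x ∩ insBall 1 y = {z}) :
    ∀ t, 2 ≤ t →
      ((insBall t x ∩ insBall t y).ncard : ℤ) ≤
        ((insBall (t - 1) z).ncard : ℤ) +
        ∑ i ∈ Finset.range (t - 1),
          ((n - 1 + (t - 1)).choose i : ℤ) * (1 - (-1 : ℤ)^((t - 1) - i)) := by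
  intro t ht
  obtain ⟨d, rfl⟩ : ∃ d, t = d + 2 := ⟨t - 2, by omega⟩
  subst hx hy
  have hmem : ∀ w, w ∈ insBall 1 ([a, !a] ++ v ++ [b]) ∩ insBall 1 ([!a] ++ v ++ [b, !b]) →
      w = z := fun w hw => (hz ▸ hw : w ∈ ({z} : Set _))
  have hza : z = a :: ([!a] ++ v ++ [b, !b]) :=
    (hmem _ ⟨⟨by simp, by simp⟩, by simp, List.sublist_cons_self _ _⟩).symm
  have hne : [a, !a] ++ v ≠ v ++ [b, !b] := by
    intro h
    have hx' : (!a) :: ([a, !a] ++ v ++ [b]) = [!a] ++ v ++ [b, !b] ++ [b] := by simp [← h]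
    have := hmem _ ⟨⟨by simp, List.sublist_cons_self _ _⟩, by rw [hx']; simp,
      hx' ▸ List.sublist_append_left _ _⟩
    simp [hza] at this
  rw [show d + 2 - 1 = d + 1 by omega, sum_choose_mul_one_sub_neg_one_pow, hza,
    show n - 1 = v.length + 2 by omega]
  exact_mod_cast ncard_inter_insBall_le_of_ne hne d
end
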